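/- arXiv:2603.28663 — 4 statements merged into one kernel-verified Lean document; each statement's English description precedes it below -/
import Mathlib

section
/- Let χ ∈ [0,1) and u_tw(z) = ((1−χ)z + 1)e^{−z} for z > 0. Then for all z > 0, (u_tw''/u_tw')'(z) = −((χ−1)/((1−χ)z + χ))² ≤ 0, and consequently the quantity η''(u_tw(z)) = −(1/u_tw'(z))·(u_tw''/u_tw')'(z) is nonpositive (the profile function η^u is concave on (0,1)). -/
/-!
The family `(a z + b) e^{-z}` is closed under differentiation, so `u_tw'` and `u_tw''` are both
affine functions times `e^{-z}`. Their quotient is the Möbius map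
`((1-χ) z + 2χ - 1) / (-((1-χ) z + χ))`, whose derivative has numerator the determinant
`-(1-χ)²`; the denominator `(1-χ) z + χ` is positive for `z > 0`, which also makes `u_tw' < 0`.
-/

open Real

lemma hasDerivAt_affine_mul_exp_neg (a b y : ℝ) :
    HasDerivAt (fun z => (a * z + b) * exp (-z)) ((-a * y + (a - b)) * exp (-y)) y := by
  exact ((((hasDerivAt_id y).const_mul a).add_const b).mul (hasDerivAt_neg y).exp).congr_deriv
    (by simp only [id]; ring)

lemma deriv_affine_mul_exp_neg (a b : ℝ) :
    deriv (fun z => (a * z + b) * exp (-z)) = fun z => (-a * z + (a - b)) * exp (-z) :=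
  funext fun y => (hasDerivAt_affine_mul_exp_neg a b y).deriv

lemma affine_mul_exp_neg_div_affine_mul_exp_neg (a b c d z : ℝ) :
    (c * z + d) * exp (-z) / ((a * z + b) * exp (-z)) = (c * z + d) / (a * z + b) :=
  mul_div_mul_right _ _ (exp_ne_zero _)

lemma hasDerivAt_affine_div_affine {a b c d y : ℝ} (hy : a * y + b ≠ 0) :
    HasDerivAt (fun z => (c * z + d) / (a * z + b)) ((c * b - a * d) / (a * y + b) ^ 2) y := by
  have hnum : HasDerivAt (fun z => c * z + d) c y := by
    simpa using ((hasDerivAt_id y).const_mul c).add_const d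
  have hden : HasDerivAt (fun z => a * z + b) a y := by
    simpa using ((hasDerivAt_id y).const_mul a).add_const b
  exact (hnum.div hden hy).congr_deriv (by ring)

/-- For χ ∈ [0,1) and u_tw(z) = ((1−χ)z + 1)e^{−z} on z > 0:
(u''/u')'(z) = −((χ−1)/((1−χ)z+χ))² ≤ 0, and η''(u_tw(z)) = −(1/u')·(u''/u')'(z) ≤ 0. -/
theorem stmt5 (χ : ℝ) (hχ : χ ∈ Set.Ico (0:ℝ) 1)
    (u : ℝ → ℝ) (hu : ∀ z : ℝ, u z = ((1 - χ) * z + 1) * Real.exp (-z)) :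
    ∀ z > (0:ℝ),
      deriv (fun y => deriv (deriv u) y / deriv u y) z
          = -((χ - 1) / ((1 - χ) * z + χ))^2 ∧
      deriv (fun y => deriv (deriv u) y / deriv u y) z ≤ 0 ∧
      -(1 / deriv u z) * deriv (fun y => deriv (deriv u) y / deriv u y) z ≤ 0 := by
  obtain ⟨hχ0, hχ1⟩ := hχ
  have hu' : deriv u = fun z => (-(1 - χ) * z + (1 - χ - 1)) * exp (-z) := by
    rw [funext hu, deriv_affine_mul_exp_neg]
  have hu'' : deriv (deriv u) =
      fun z => (-(-(1 - χ)) * z + (-(1 - χ) - (1 - χ - 1))) * exp (-z) := by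
    rw [hu', deriv_affine_mul_exp_neg]
  have hratio : (fun y => deriv (deriv u) y / deriv u y) =
      fun y => (-(-(1 - χ)) * y + (-(1 - χ) - (1 - χ - 1))) / (-(1 - χ) * y + (1 - χ - 1)) := by
    funext y
    rw [hu'', hu']
    exact affine_mul_exp_neg_div_affine_mul_exp_neg _ _ _ _ y
  intro z hz
  have hpos : 0 < (1 - χ) * z + χ := by nlinarith
  have hformula : deriv (fun y => deriv (deriv u) y / deriv u y) z
      = -((χ - 1) / ((1 - χ) * z + χ)) ^ 2 := by
    have hden : -(1 - χ) * z + (1 - χ - 1) = -((1 - χ) * z + χ) := by ring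
    rw [hratio, (hasDerivAt_affine_div_affine (hden ▸ neg_ne_zero.mpr hpos.ne')).deriv, hden]
    field_simp
    ring
  have hnonpos : deriv (fun y => deriv (deriv u) y / deriv u y) z ≤ 0 :=
    hformula ▸ neg_nonpos.mpr (sq_nonneg _)
  have hu'_neg : deriv u z < 0 := by
    rw [hu']
    exact mul_neg_of_neg_of_pos (by linarith) (exp_pos _)
  refine ⟨hformula, hnonpos, mul_nonpos_of_nonneg_of_nonpos ?_ hnonpos⟩
  exact neg_nonneg.mpr (one_div_neg.mpr hu'_neg).le
end

section
/- Suppose g : [0,∞) → ℝ is locally bounded and there exists C > 0 such that for all t ≥ 0, g(t) ≤ C(1 + sup_{s ∈ [0,t]} g(s)/√(1+s)). Then sup_{t ≥ 0} g(t) < +∞. -/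
/-- Self-improving recursive bound lemma: if g is locally bounded on [0,∞) and
g(t) ≤ C(1 + sup_{s ∈ [0,t]} g(s)/√(1+s)) for all t ≥ 0, then g is bounded above
on [0,∞). -/
theorem stmt6 (g : ℝ → ℝ)
    (hloc : ∀ T : ℝ, BddAbove (g '' Set.Icc 0 T))
    (C : ℝ) (hC : 0 < C)
    (hrec : ∀ t ≥ (0:ℝ),
      g t ≤ C * (1 + sSup ((fun s => g s / Real.sqrt (1 + s)) '' Set.Icc 0 t))) :
    BddAbove (g '' Set.Ici 0) := by
  set t₀ : ℝ := max 0 (4*C^2 - 1) with ht₀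
  obtain ⟨B, hB⟩ := hloc t₀
  set K : ℝ := max B 0 with hKdef
  have hK0 : (0:ℝ) ≤ K := le_max_right _ _
  have hgK : ∀ s ∈ Set.Icc (0:ℝ) t₀, g s ≤ K := fun s hs =>
    le_trans (hB (Set.mem_image_of_mem g hs)) (le_max_left _ _)
  refine ⟨2*C*(1+K), ?_⟩
  rintro y ⟨t, ht, rfl⟩
  have ht0 : (0:ℝ) ≤ t := ht
  set T := max t t₀ with hT
  set S := sSup (g '' Set.Icc 0 T) with hSdef
  have hgtS : g t ≤ S := le_csSup (hloc T) ⟨t, ⟨ht0, le_max_left _ _⟩, rfl⟩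
  have hsqrt2C : ∀ s, t₀ ≤ s → 2*C ≤ Real.sqrt (1+s) := by
    intro s hs
    rw [show (2*C) = Real.sqrt ((2*C)^2) from (Real.sqrt_sq (by positivity)).symm]
    apply Real.sqrt_le_sqrt
    have h1 : 4*C^2 - 1 ≤ t₀ := le_max_right _ _
    nlinarith
  have hSmax0 : (0:ℝ) ≤ max S 0 := le_max_right _ _
  have hSle : S ≤ C*(1+K) + max S 0 / 2 := by
    apply Real.sSup_le _ (by positivity)
    rintro x ⟨u, hu, rfl⟩
    have hu0 : (0:ℝ) ≤ u := hu.1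
    have hratio : sSup ((fun s => g s / Real.sqrt (1+s)) '' Set.Icc 0 u)
        ≤ K + max S 0 / (2*C) := by
      apply Real.sSup_le _ (by positivity)
      rintro x ⟨s, hs, rfl⟩
      have hs0 : (0:ℝ) ≤ s := hs.1
      have h1s : (1:ℝ) ≤ Real.sqrt (1+s) := by
        rw [Real.le_sqrt (by norm_num) (by linarith)]; nlinarith
      have hpos : (0:ℝ) < Real.sqrt (1+s) := lt_of_lt_of_le one_pos h1s
      rcases le_total s t₀ with hst | hst
      · have hgs : g s ≤ K := hgK s ⟨hs0, hst⟩
        have hr : g s / Real.sqrt (1+s) ≤ K := by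
          rcases le_total (g s) 0 with hg | hg
          · exact le_trans (div_nonpos_iff.mpr (Or.inr ⟨hg, hpos.le⟩)) hK0
          · exact le_trans (div_le_self hg h1s) hgs
        have : (0:ℝ) ≤ max S 0 / (2*C) := by positivity
        linarith
      · have hsT : s ≤ T := le_trans hs.2 hu.2
        have hgs : g s ≤ S := le_csSup (hloc T) ⟨s, ⟨hs0, hsT⟩, rfl⟩
        have h2C : 2*C ≤ Real.sqrt (1+s) := hsqrt2C s hst
        have hr : g s / Real.sqrt (1+s) ≤ max S 0 / (2*C) := by
          rcases le_total (g s) 0 with hg | hg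
          · exact le_trans (div_nonpos_iff.mpr (Or.inr ⟨hg, hpos.le⟩)) (by positivity)
          · have hg' : g s ≤ max S 0 := le_trans hgs (le_max_left _ _)
            gcongr
        linarith
    have hC' : C ≠ 0 := ne_of_gt hC
    calc g u ≤ C * (1 + sSup ((fun s => g s / Real.sqrt (1+s)) '' Set.Icc 0 u)) :=
          hrec u hu0
      _ ≤ C * (1 + (K + max S 0/(2*C))) := by
          apply mul_le_mul_of_nonneg_left (by linarith) hC.le
      _ = C*(1+K) + max S 0/2 := by field_simp; ring
  rcases le_total S 0 with hS | hS
  · have : g t ≤ 0 := le_trans hgtS hS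
    nlinarith
  · rw [max_eq_left hS] at hSle
    linarith
end

section
/- Suppose f : [0,∞) → ℝ is locally bounded and there exist constants C, D > 0 such that for all t ≥ 0, e^{−f(t)} ≤ C√(1+t) − D·f(t) + C·sup_{s ∈ [0,t]} e^{−f(s)}/√(1+s). Then there exists a constant K such that f(t) ≥ −(1/2)log(1+t) − K for all t ≥ 0. -/
/-!
Put `g s = e^{-f s} / √(1+s)` and `S t = sup_{[0,t]} g`. Since `D log p ≤ p/2 + const`,
the term `-D f t = D log e^{-f t}` is absorbed into half of the left-hand side of the
recursion, and dividing by `√(1+t)` leaves `g t ≤ A + 2C S t / √(1+t) ≤ A + S t / 2` once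
`√(1+t) ≥ 4C`. Such a recursion forces `S t ≤ max (S T₀) (2A)`, so `g` is bounded, which
is the claim after taking logarithms.
-/

open Real Set

lemma exists_forall_le_of_le_add_half_sSup {g : ℝ → ℝ} (hbdd : ∀ t, BddAbove (g '' Icc 0 t))
    {A T₀ : ℝ} (h : ∀ t ≥ T₀, g t ≤ A + sSup (g '' Icc 0 t) / 2) :
    ∃ B, ∀ t ≥ 0, g t ≤ B := by
  set S : ℝ → ℝ := fun t => sSup (g '' Icc 0 t)
  have le_S : ∀ {s t}, 0 ≤ s → s ≤ t → g s ≤ S t := fun hs hst =>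
    le_csSup (hbdd _) ⟨_, ⟨hs, hst⟩, rfl⟩
  refine ⟨max (S T₀) (2 * A), fun t ht => ?_⟩
  have hS : S t ≤ max (S T₀) (A + S t / 2) := by
    refine csSup_le ⟨g 0, 0, ⟨le_rfl, ht⟩, rfl⟩ ?_
    rintro _ ⟨s, ⟨hs, hst⟩, rfl⟩
    rcases le_total s T₀ with hsT | hTs
    · exact le_max_of_le_left (le_S hs hsT)
    · have hS_mono : S s ≤ S t := csSup_le_csSup (hbdd t) ⟨g 0, 0, ⟨le_rfl, hs⟩, rfl⟩
        (image_mono (Icc_subset_Icc_right hst))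
      exact le_max_of_le_right ((h s hTs).trans (by linarith))
  have hSB : S t ≤ max (S T₀) (2 * A) := by
    rcases le_max_iff.1 hS with hS | hS
    · exact le_max_of_le_left hS
    · exact le_max_of_le_right (by linarith)
  exact (le_S ht le_rfl).trans hSB

lemma mul_log_le_half_add {D p : ℝ} (hD : 0 < D) (hp : 0 < p) :
    D * log p ≤ p / 2 + D * (log (2 * D) - 1) := by
  have h := log_le_sub_one_of_pos (show 0 < p / (2 * D) by positivity)
  rw [log_div hp.ne' (by positivity)] at h
  have hDp : D * (p / (2 * D)) = p / 2 := by field_simp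
  nlinarith

lemma exp_neg_div_sqrt_le_add_half {C D y t S : ℝ} (hD : 0 < D)
    (ht : 16 * C ^ 2 ≤ t) (hS : 0 ≤ S) (h : exp (-y) ≤ C * √(1 + t) - D * y + C * S) :
    exp (-y) / √(1 + t) ≤ 2 * C + 2 * |D * (log (2 * D) - 1)| + S / 2 := by
  have habsorb := mul_log_le_half_add hD (exp_pos (-y))
  rw [log_exp] at habsorb
  have hsqrt_ge_one : 1 ≤ √(1 + t) := one_le_sqrt.2 (by nlinarith)
  have hsqrt_ge : 4 * C ≤ √(1 + t) := le_sqrt_of_sq_le (by nlinarith)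
  rw [div_le_iff₀ (by positivity)]
  nlinarith [le_abs_self (D * (log (2 * D) - 1)), abs_nonneg (D * (log (2 * D) - 1))]

lemma bddAbove_exp_neg_div_sqrt {f : ℝ → ℝ} {T : ℝ} (hf : BddBelow (f '' Icc 0 T)) :
    BddAbove ((fun s => exp (-f s) / √(1 + s)) '' Icc 0 T) := by
  obtain ⟨m, hm⟩ := hf
  refine ⟨exp (-m), ?_⟩
  rintro _ ⟨s, hs, rfl⟩
  have hms : m ≤ f s := hm (mem_image_of_mem f hs)
  calc exp (-f s) / √(1 + s) ≤ exp (-f s) :=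
        div_le_self (exp_nonneg _) (one_le_sqrt.2 (by linarith [hs.1]))
    _ ≤ exp (-m) := exp_le_exp.2 (by linarith)

lemma neg_half_log_sub_log_le {x t B : ℝ} (ht : 0 ≤ t) (h : exp (-x) / √(1 + t) ≤ B) :
    -(1 / 2) * log (1 + t) - log B ≤ x := by
  have hsqrt : 0 < √(1 + t) := sqrt_pos.2 (by linarith)
  have hB : 0 < B := (div_pos (exp_pos _) hsqrt).trans_le h
  have hexp : exp (-x) ≤ B * √(1 + t) := (div_le_iff₀ hsqrt).1 h
  have hlog := (le_log_iff_exp_le (by positivity)).2 hexp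
  rw [log_mul hB.ne' hsqrt.ne', log_sqrt (by linarith)] at hlog
  linarith

theorem stmt7_general (f : ℝ → ℝ)
    (hloc : ∀ T : ℝ, BddAbove (f '' Set.Icc 0 T) ∧ BddBelow (f '' Set.Icc 0 T))
    (C D : ℝ) (hD : 0 < D)
    (hrec : ∀ t ≥ (0:ℝ),
      Real.exp (-f t) ≤ C * Real.sqrt (1 + t) - D * f t
        + C * sSup ((fun s => Real.exp (-f s) / Real.sqrt (1 + s)) '' Set.Icc 0 t)) :
    ∃ K : ℝ, ∀ t ≥ (0:ℝ), f t ≥ -(1/2) * Real.log (1 + t) - K := by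
  obtain ⟨B, hB⟩ := exists_forall_le_of_le_add_half_sSup
    (fun T => bddAbove_exp_neg_div_sqrt (hloc T).2) (T₀ := 16 * C ^ 2) fun t ht =>
      exp_neg_div_sqrt_le_add_half hD ht
        (sSup_nonneg (by rintro _ ⟨s, -, rfl⟩; positivity)) (hrec t (by nlinarith))
  exact ⟨log B, fun t ht => neg_half_log_sub_log_le ht (hB t ht)⟩

/-- Recursive lower-bound lemma: if f is locally bounded on [0,∞) and
e^{−f(t)} ≤ C√(1+t) − D·f(t) + C·sup_{s∈[0,t]} e^{−f(s)}/√(1+s), then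
f(t) ≥ −(1/2)log(1+t) − K for some constant K. -/
theorem stmt7 (f : ℝ → ℝ)
    (hloc : ∀ T : ℝ, BddAbove (f '' Set.Icc 0 T) ∧ BddBelow (f '' Set.Icc 0 T))
    (C D : ℝ) (hC : 0 < C) (hD : 0 < D)
    (hrec : ∀ t ≥ (0:ℝ),
      Real.exp (-f t) ≤ C * Real.sqrt (1 + t) - D * f t
        + C * sSup ((fun s => Real.exp (-f s) / Real.sqrt (1 + s)) '' Set.Icc 0 t)) :
    ∃ K : ℝ, ∀ t ≥ (0:ℝ), f t ≥ -(1/2) * Real.log (1 + t) - K :=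
  stmt7_general f hloc C D hD hrec
end

section
/- Fix t₀ > 256 and K ≥ 4.5, and define F(t,z) = e^{−z}·e^{−z²/(4(t+t₀))}·e^{(z²/(t+t₀) − K)/√(t+t₀)} for t ≥ 0, z ∈ ℝ. Then for all t ≥ 0 and all z ≥ 0, F_t(t,z) − F_zz(t,z) − (2 − 1/(2(t+t₀)))·F_z(t,z) − F(t,z) ≥ 0. -/
/-!
Write `F(t, z) = exp (φ (t + t₀) z)` with `φ τ z = -z - z²/(4τ) + (z²/τ - K)/√τ`. Since
`F_t = φ_τ F`, `F_z = φ_z F` and `F_zz = (φ_z² + φ_zz) F`, the operator applied to `F` is `F`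
times `φ_τ - φ_z² - φ_zz - (2 - 1/(2τ)) φ_z - 1`. In the variable `s = √τ` this factor is
`(2 z² s - 16 z² - z s² + 2 (K - 4) s³ + 4 z s) / (4 s⁶)`, whose numerator is nonnegative
for `z ≥ 0`, `s ≥ 16` and `K ≥ 33/8`.
-/

open Real

lemma deriv_deriv_exp_comp {φ φ' : ℝ → ℝ} {φ'' z : ℝ} (hφ : ∀ w, HasDerivAt φ (φ' w) w)
    (hφ' : HasDerivAt φ' φ'' z) :
    deriv (deriv fun w => exp (φ w)) z = exp (φ z) * (φ' z ^ 2 + φ'') := by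
  have hderiv : deriv (fun w => exp (φ w)) = fun w => exp (φ w) * φ' w :=
    funext fun w => (hφ w).exp.deriv
  rw [hderiv]
  refine ((hφ z).exp.mul hφ').deriv.trans ?_
  ring

namespace PushmiPullyu

noncomputable section

def phi (K τ z : ℝ) : ℝ := -z + -z ^ 2 / (4 * τ) + (z ^ 2 / τ - K) / √τ

def phiDz (τ z : ℝ) : ℝ := -1 - z / (2 * τ) + 2 * z / (τ * √τ)

def phiDzz (τ : ℝ) : ℝ := -(1 / (2 * τ)) + 2 / (τ * √τ)

def phiDt (K τ z : ℝ) : ℝ :=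
  z ^ 2 / (4 * τ ^ 2) - 3 * z ^ 2 / (2 * τ ^ 2 * √τ) + K / (2 * τ * √τ)

end

variable {K τ : ℝ}

lemma hasDerivAt_phi_z (τ z : ℝ) : HasDerivAt (phi K τ) (phiDz τ z) z := by
  have hsq : HasDerivAt (fun w : ℝ => w ^ 2) (2 * z) z := by simpa using hasDerivAt_pow 2 z
  have h := ((hasDerivAt_id z).neg.add (hsq.neg.div_const (4 * τ))).add
    (((hsq.div_const τ).sub_const K).div_const √τ)
  refine h.congr_deriv ?_
  simp only [phiDz]
  ring

lemma hasDerivAt_phiDz (τ z : ℝ) : HasDerivAt (phiDz τ) (phiDzz τ) z := by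
  have h := ((hasDerivAt_const z (-1 : ℝ)).sub ((hasDerivAt_id z).div_const (2 * τ))).add
    (((hasDerivAt_id z).const_mul (2 : ℝ)).div_const (τ * √τ))
  refine h.congr_deriv ?_
  simp only [phiDzz]
  ring

lemma hasDerivAt_phi_t (hτ : 0 < τ) (z : ℝ) :
    HasDerivAt (fun σ => phi K σ z) (phiDt K τ z) τ := by
  have hgauss := (hasDerivAt_const τ (-z ^ 2)).div ((hasDerivAt_id τ).const_mul 4)
    (by simpa using hτ.ne')
  have hcorr := (((hasDerivAt_const τ (z ^ 2)).div (hasDerivAt_id τ) hτ.ne').sub_const K).div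
    ((hasDerivAt_id τ).sqrt hτ.ne') (sqrt_pos.2 hτ).ne'
  refine (((hasDerivAt_const τ (-z)).add hgauss).add hcorr).congr_deriv ?_
  obtain ⟨s, hs, rfl⟩ : ∃ s, 0 < s ∧ τ = s ^ 2 := ⟨√τ, sqrt_pos.2 hτ, (sq_sqrt hτ.le).symm⟩
  simp only [phiDt, Pi.div_apply, id, sqrt_sq hs.le]
  field_simp
  ring

lemma phiDt_sub_nonneg (hτ : 256 ≤ τ) (hK : 33 / 8 ≤ K) {z : ℝ} (hz : 0 ≤ z) :
    0 ≤ phiDt K τ z - (phiDz τ z ^ 2 + phiDzz τ) - (2 - 1 / (2 * τ)) * phiDz τ z - 1 := by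
  obtain ⟨s, hs16, rfl⟩ : ∃ s, 16 ≤ s ∧ τ = s ^ 2 :=
    ⟨√τ, le_sqrt_of_sq_le (by linarith), (sq_sqrt (by linarith)).symm⟩
  have hs : 0 < s := by linarith
  have hnum : phiDt K (s ^ 2) z - (phiDz (s ^ 2) z ^ 2 + phiDzz (s ^ 2))
      - (2 - 1 / (2 * s ^ 2)) * phiDz (s ^ 2) z - 1
      = (2 * z ^ 2 * s - 16 * z ^ 2 - z * s ^ 2 + 2 * (K - 4) * s ^ 3 + 4 * z * s)
        / (4 * s ^ 6) := by
    simp only [phiDt, phiDz, phiDzz, sqrt_sq hs.le]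
    field_simp
    ring
  rw [hnum]
  refine div_nonneg ?_ (by positivity)
  -- `z² s - z s² + s³/4 = s (z - s/2)²`, which is where the threshold `K ≥ 33/8` comes from.
  nlinarith [mul_nonneg (mul_nonneg hz hz) (sub_nonneg.2 hs16),
    mul_nonneg hs.le (sq_nonneg (2 * z - s)), mul_nonneg hz hs.le,
    mul_nonneg (sub_nonneg.2 hK) (pow_pos hs 3).le]

end PushmiPullyu

open PushmiPullyu in
/-- The Gaussian-corrected exponential F = E·G·H is a supersolution of the
pushmi-pullyu moving-frame operator on {z ≥ 0}:
F_t − F_zz − (2 − 1/(2(t+t₀)))F_z − F ≥ 0. -/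
theorem stmt14 (t₀ K : ℝ) (ht₀ : 256 < t₀) (hK : 4.5 ≤ K)
    (F : ℝ → ℝ → ℝ)
    (hF : ∀ t z : ℝ, F t z = Real.exp (-z) * Real.exp (-z^2 / (4*(t + t₀))) *
        Real.exp ((z^2 / (t + t₀) - K) / Real.sqrt (t + t₀))) :
    ∀ t ≥ (0:ℝ), ∀ z ≥ (0:ℝ),
      deriv (fun s => F s z) t - deriv (deriv (F t)) z
        - (2 - 1/(2*(t + t₀))) * deriv (F t) z - F t z ≥ 0 := by
  intro t ht z hz
  have hτ : 0 < t + t₀ := by linarith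
  have hFphi : F = fun t z => exp (phi K (t + t₀) z) := by
    ext t z
    rw [hF, phi, exp_add, exp_add]
  have hdt : deriv (fun s => F s z) t = exp (phi K (t + t₀) z) * phiDt K (t + t₀) z := by
    rw [hFphi]
    exact ((hasDerivAt_phi_t hτ z).comp_add_const t t₀).exp.deriv
  have hdz : deriv (F t) z = exp (phi K (t + t₀) z) * phiDz (t + t₀) z := by
    rw [hFphi]
    exact (hasDerivAt_phi_z _ z).exp.deriv
  have hdzz : deriv (deriv (F t)) z
      = exp (phi K (t + t₀) z) * (phiDz (t + t₀) z ^ 2 + phiDzz (t + t₀)) := by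
    rw [hFphi]
    exact deriv_deriv_exp_comp (hasDerivAt_phi_z _) (hasDerivAt_phiDz _ z)
  rw [hdt, hdzz, hdz, hFphi, ge_iff_le]
  have hfactor := phiDt_sub_nonneg (K := K) (τ := t + t₀) (by linarith) (by linarith) hz
  linarith [mul_nonneg (exp_pos (phi K (t + t₀) z)).le hfactor]
end
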